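/- arXiv:0705.3990 — 3 statements merged into one kernel-verified Lean document; each statement's English description precedes it below -/
import Mathlib

section
/- Let x ∈ ℝ^n with 0 < x_l < 1 for all l. Fix a row index i with support A_i of size at least 2. Define β_l = 1 if x_l > 1/2 and 0 otherwise, S' = {l ∈ A_i : β_l = 1}, and u = 1 + Σ_{l∈A_i} max{x_l−1, −x_l}. If |S'| is even, and l_min = argmin_{l∈A_i} |2x_l − 1|, then u − |2 x_{l_min} − 1| equals the maximum over odd-size subsets S ⊆ A_i of [1 + Σ_{l∈S}(x_l−1) − Σ_{l∈A_i\S} x_l]. -/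
/-- if the set `S' = {l ∈ A_i : x_l > 1/2}` has even cardinality
and `l_min` minimizes `|2x_l − 1|` over `A_i`, then
`u − |2 x_{l_min} − 1|` (with `u = 1 + Σ_{l∈A_i} max{x_l−1, −x_l}`) is the
maximum over odd-size subsets `S ⊆ A_i` of
`1 + Σ_{l∈S}(x_l−1) − Σ_{l∈A_i\S} x_l`. -/
theorem u_is_theta_even_case {n : ℕ} (x : Fin n → ℝ)
    (hbox : ∀ l : Fin n, 0 < x l ∧ x l < 1)
    (Ai : Finset (Fin n)) (hAi : 2 ≤ Ai.card)
    (S' : Finset (Fin n)) (hS' : S' = Ai.filter (fun l => x l > 1 / 2))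
    (heven : Even S'.card)
    (u : ℝ) (hu : u = 1 + ∑ l ∈ Ai, max (x l - 1) (-(x l)))
    (lmin : Fin n) (hlmin : lmin ∈ Ai)
    (hmin : ∀ l ∈ Ai, |2 * x lmin - 1| ≤ |2 * x l - 1|) :
    IsGreatest
      {v : ℝ | ∃ S ⊆ Ai, Odd S.card ∧
        v = 1 + ∑ l ∈ S, (x l - 1) - ∑ l ∈ Ai \ S, x l}
      (u - |2 * x lmin - 1|) := by
  have hS'sub : S' ⊆ Ai := by rw [hS']; exact Finset.filter_subset _ _
  -- key identity
  have key : ∀ S ⊆ Ai, 1 + ∑ l ∈ S, (x l - 1) - ∑ l ∈ Ai \ S, x l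
      = u - ∑ l ∈ symmDiff S S', |2 * x l - 1| := by
    intro S hS
    have hsub : symmDiff S S' ⊆ Ai := by
      rw [symmDiff_def]
      exact Finset.union_subset ((Finset.sdiff_subset).trans hS)
        ((Finset.sdiff_subset).trans hS'sub)
    have hpt : ∀ l ∈ Ai,
        max (x l - 1) (-(x l)) - (if l ∈ S then x l - 1 else -(x l))
        = (if l ∈ symmDiff S S' then |2 * x l - 1| else 0) := by
      intro l hl
      have hmem : l ∈ S' ↔ 1 / 2 < x l := by
        rw [hS', Finset.mem_filter]; exact ⟨fun h => h.2, fun h => ⟨hl, h⟩⟩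
      have hb := hbox l
      by_cases hls : l ∈ S <;> rcases lt_or_ge (1/2 : ℝ) (x l) with hx | hx
      · have h1 : max (x l - 1) (-(x l)) = x l - 1 := max_eq_left (by linarith)
        have hD : l ∉ symmDiff S S' := by
          intro h
          rcases Finset.mem_symmDiff.mp h with ⟨_, h⟩ | ⟨_, h⟩
          · exact h (hmem.mpr hx)
          · exact h hls
        rw [if_pos hls, if_neg hD, h1]; ring
      · have h1 : max (x l - 1) (-(x l)) = -(x l) := max_eq_right (by linarith)
        have h2 : l ∉ S' := fun h => absurd (hmem.mp h) (not_lt.mpr hx)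
        have hD : l ∈ symmDiff S S' := Finset.mem_symmDiff.mpr (Or.inl ⟨hls, h2⟩)
        have h3 : |2 * x l - 1| = 1 - 2 * x l := by
          rw [abs_of_nonpos (by linarith)]; ring
        rw [if_pos hls, if_pos hD, h1, h3]; ring
      · have h1 : max (x l - 1) (-(x l)) = x l - 1 := max_eq_left (by linarith)
        have hD : l ∈ symmDiff S S' := Finset.mem_symmDiff.mpr (Or.inr ⟨hmem.mpr hx, hls⟩)
        have h3 : |2 * x l - 1| = 2 * x l - 1 := abs_of_nonneg (by linarith)
        rw [if_neg hls, if_pos hD, h1, h3]; ring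
      · have h1 : max (x l - 1) (-(x l)) = -(x l) := max_eq_right (by linarith)
        have h2 : l ∉ S' := fun h => absurd (hmem.mp h) (not_lt.mpr hx)
        have hD : l ∉ symmDiff S S' := by
          intro h
          rcases Finset.mem_symmDiff.mp h with ⟨h, _⟩ | ⟨h, _⟩
          · exact hls h
          · exact h2 h
        rw [if_neg hls, if_neg hD, h1]; ring
    have hsum1 : ∑ l ∈ Ai, (max (x l - 1) (-(x l)) - (if l ∈ S then x l - 1 else -(x l)))
        = ∑ l ∈ symmDiff S S', |2 * x l - 1| := by
      rw [Finset.sum_congr rfl hpt, Finset.sum_ite_mem,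
        Finset.inter_eq_right.mpr hsub]
    have hsplit : ∑ l ∈ Ai, (if l ∈ S then x l - 1 else -(x l))
        = ∑ l ∈ S, (x l - 1) - ∑ l ∈ Ai \ S, x l := by
      rw [← Finset.sum_sdiff hS]
      rw [Finset.sum_congr rfl (fun l hl => if_neg (Finset.mem_sdiff.mp hl).2),
        Finset.sum_congr (rfl : S = S) (fun l hl => if_pos hl), Finset.sum_neg_distrib]
      ring
    rw [Finset.sum_sub_distrib, hsplit] at hsum1
    rw [hu]; linarith
  -- parity lemma
  have parity : ∀ S : Finset (Fin n), Odd S.card ↔ Odd (symmDiff S S').card := by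
    intro S
    have h1 := Finset.card_sdiff_add_card_inter S S'
    have h2 := Finset.card_sdiff_add_card_inter S' S
    have h3 : (symmDiff S S').card = (S \ S').card + (S' \ S).card := by
      rw [symmDiff_def, Finset.sup_eq_union,
        Finset.card_union_of_disjoint disjoint_sdiff_sdiff]
    have h4 : (S ∩ S').card = (S' ∩ S).card := by rw [Finset.inter_comm]
    have hk := Nat.even_iff.mp heven
    rw [Nat.odd_iff, Nat.odd_iff]
    omega
  constructor
  · -- membership with S₀ = symmDiff S' {lmin}
    refine ⟨symmDiff S' {lmin}, ?_, ?_, ?_⟩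
    · rw [symmDiff_def]
      exact Finset.union_subset ((Finset.sdiff_subset).trans hS'sub)
        ((Finset.sdiff_subset).trans (Finset.singleton_subset_iff.mpr hlmin))
    · rw [parity]
      have : symmDiff (symmDiff S' {lmin}) S' = {lmin} := by
        rw [symmDiff_comm S' {lmin}, symmDiff_symmDiff_cancel_right]
      rw [this]; simp
    · rw [key _ ?_]
      · have : symmDiff (symmDiff S' {lmin}) S' = {lmin} := by
          rw [symmDiff_comm S' {lmin}, symmDiff_symmDiff_cancel_right]
        rw [this, Finset.sum_singleton]
      · rw [symmDiff_def]
        exact Finset.union_subset ((Finset.sdiff_subset).trans hS'sub)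
          ((Finset.sdiff_subset).trans (Finset.singleton_subset_iff.mpr hlmin))
  · rintro v ⟨S, hS, hodd, rfl⟩
    rw [key S hS]
    have hne : (symmDiff S S').Nonempty := by
      obtain ⟨m, hm⟩ := (parity S).mp hodd
      rw [← Finset.card_pos, hm]; omega
    obtain ⟨l0, hl0⟩ := hne
    have hsub : symmDiff S S' ⊆ Ai := by
      rw [symmDiff_def]
      exact Finset.union_subset ((Finset.sdiff_subset).trans hS)
        ((Finset.sdiff_subset).trans hS'sub)
    have h1 : |2 * x l0 - 1| ≤ ∑ l ∈ symmDiff S S', |2 * x l - 1| :=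
      Finset.single_le_sum (f := fun l => |2 * x l - 1|) (fun l _ => abs_nonneg _) hl0
    have h2 : |2 * x lmin - 1| ≤ |2 * x l0 - 1| := hmin l0 (hsub hl0)
    linarith
end

section
/- Every codeword of the binary code C = {x ∈ F_2^n : Hx = 0}, viewed as a 0-1 vector in ℝ^n, is contained in the fundamental polytope P. -/
/-- The fundamental polytope: (non-strict) parity and box constraints. -/
def fundamentalPolytope {m n : ℕ} (A : Fin m → Finset (Fin n)) :
    Set (Fin n → ℝ) :=
  {x | (∀ i : Fin m, ∀ S ⊆ A i, Odd S.card →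
        1 + ∑ t ∈ S, (x t - 1) - ∑ t ∈ (A i) \ S, x t ≤ 0) ∧
       (∀ j : Fin n, 0 ≤ x j ∧ x j ≤ 1)}

/-- every codeword (a 0-1 vector whose support meets each row
support `A_i` in an even number of positions) lies in the fundamental
polytope. -/
theorem codeword_mem_fundamentalPolytope {m n : ℕ}
    (A : Fin m → Finset (Fin n)) (x : Fin n → ℝ)
    (hbit : ∀ j : Fin n, x j = 0 ∨ x j = 1)
    (hparity : ∀ i : Fin m, Even ((A i).filter (fun j => x j = 1)).card) :
    x ∈ fundamentalPolytope A := by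
  classical
  constructor
  · intro i S hS hodd
    set F := (A i).filter (fun j => x j = 1) with hF
    have hsum : ∀ T : Finset (Fin n), ∑ t ∈ T, x t = ((T.filter (fun j => x j = 1)).card : ℝ) := by
      intro T
      rw [Finset.card_filter]
      push_cast
      refine Finset.sum_congr rfl fun t _ => ?_
      rcases hbit t with h | h <;> simp [h]
    have h1 : ∑ t ∈ S, (x t - 1) = ((S.filter (fun j => x j = 1)).card : ℝ) - S.card := by
      rw [Finset.sum_sub_distrib, hsum]; simp
    rw [h1, hsum]
    have hfS : S.filter (fun j => x j = 1) = F ∩ S := by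
      ext t
      simp only [hF, Finset.mem_filter, Finset.mem_inter]
      exact ⟨fun h => ⟨⟨hS h.1, h.2⟩, h.1⟩, fun h => ⟨h.2, h.1.2⟩⟩
    have hfAS : (A i \ S).filter (fun j => x j = 1) = F \ S := by
      ext t
      simp only [hF, Finset.mem_filter, Finset.mem_sdiff]
      tauto
    rw [hfS, hfAS]
    have hcard : (F ∩ S).card + (S \ F).card = S.card := by
      rw [Finset.inter_comm]; exact Finset.card_inter_add_card_sdiff S F
    have hne : S ≠ F := by
      intro h
      rw [h] at hodd
      exact (Nat.not_even_iff_odd.mpr hodd) (hparity i)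
    have hpos : 1 ≤ (S \ F).card + (F \ S).card := by
      rcases Nat.eq_zero_or_pos ((S \ F).card + (F \ S).card) with h | h
      · exfalso
        have h1 : S ⊆ F := Finset.sdiff_eq_empty_iff_subset.mp
          (Finset.card_eq_zero.mp (by omega))
        have h2 : F ⊆ S := Finset.sdiff_eq_empty_iff_subset.mp
          (Finset.card_eq_zero.mp (by omega))
        exact hne (Finset.Subset.antisymm h1 h2)
      · exact h
    have : ((F ∩ S).card : ℝ) + (S \ F).card = S.card := by exact_mod_cast hcard
    have : (1 : ℝ) ≤ (S \ F).card + (F \ S).card := by exact_mod_cast hpos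
    linarith
  · intro j
    rcases hbit j with h | h <;> simp [h]
end

section
/- Conversely, every 0-1 vector in the fundamental polytope P is a codeword: if x ∈ {0,1}^n and x satisfies all parity inequalities of P, then for every row i, Σ_{j∈A_i} x_j is even. -/
/-- a 0-1 vector satisfying all parity inequalities of the
fundamental polytope has even parity on every row support, i.e. it is a
codeword. -/
theorem zeroOne_in_polytope_is_codeword {m n : ℕ}
    (A : Fin m → Finset (Fin n)) (hAne : ∀ i : Fin m, (A i).Nonempty)
    (x : Fin n → ℝ)
    (hbit : ∀ j : Fin n, x j = 0 ∨ x j = 1)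
    (hpar : ∀ i : Fin m, ∀ S ⊆ A i, Odd S.card →
      1 + ∑ t ∈ S, (x t - 1) - ∑ t ∈ (A i) \ S, x t ≤ 0) :
    ∀ i : Fin m, Even ((A i).filter (fun j => x j = 1)).card := by
  intro i
  by_contra hodd
  rw [Nat.not_even_iff_odd] at hodd
  have h := hpar i ((A i).filter (fun j => x j = 1)) (Finset.filter_subset _ _) hodd
  have h1 : ∑ t ∈ (A i).filter (fun j => x j = 1), (x t - 1) = 0 := by
    apply Finset.sum_eq_zero
    intro t ht
    rw [Finset.mem_filter] at ht
    simp [ht.2]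
  have h2 : ∑ t ∈ (A i) \ (A i).filter (fun j => x j = 1), x t = 0 := by
    apply Finset.sum_eq_zero
    intro t ht
    rw [Finset.mem_sdiff, Finset.mem_filter] at ht
    rcases hbit t with h0 | h0
    · exact h0
    · exact absurd ⟨ht.1, h0⟩ ht.2
  rw [h1, h2] at h
  linarith
end
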